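/- For n ≥ 2, the set P = {ξ_{(1,2)}} ∪ {⟨(k,l),(1,1)⟩ : k,l ∈ [n]} is a disjunctive subset of the semigroup (A^+(B_n), +); that is, for all f, g ∈ A^+(B_n), if u + f + v ∈ P ⇔ u + g + v ∈ P for all u, v ∈ A^+(B_n), then f = g. -/

import Mathlib

/-- The Brandt semigroup `B_n`: pairs from `Fin n × Fin n` together with a zero `ϑ = none`. -/
abbrev Brandt (n : ℕ) := Option (Fin n × Fin n)

/-- Addition in the Brandt semigroup `B_n`. -/
def bAdd {n : ℕ} : Brandt n → Brandt n → Brandt n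
  | some (i, j), some (k, l) => if j = k then some (i, l) else none
  | _, _ => none

/-- Pointwise addition on self-maps of `B_n`. -/
def padd {n : ℕ} (f g : Brandt n → Brandt n) : Brandt n → Brandt n :=
  fun x => bAdd (f x) (g x)

/-- Composition of self-maps of `B_n`, arguments written on the left: `x (f ∘ g) = (x f) g`. -/
def mcomp {n : ℕ} (f g : Brandt n → Brandt n) : Brandt n → Brandt n :=
  fun x => g (f x)

/-- The constant map `ξ_c`. -/
def xi {n : ℕ} (c : Brandt n) : Brandt n → Brandt n := fun _ => c

/-- `f` is affine: `f = g + h` with `g` an endomorphism of `(B_n,+)` and `h` a constant map. -/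
def IsAffine {n : ℕ} (f : Brandt n → Brandt n) : Prop :=
  ∃ (g : Brandt n → Brandt n) (c : Brandt n),
    (∀ a b, g (bAdd a b) = bAdd (g a) (g b)) ∧ f = padd g (xi c)

/-- Membership in `A⁺(B_n)`: the smallest subset of `M(B_n)` containing all affine maps and
closed under pointwise addition and composition. -/
inductive AP (n : ℕ) : (Brandt n → Brandt n) → Prop
  | base {f} : IsAffine f → AP n f
  | add {f g} : AP n f → AP n g → AP n (padd f g)
  | comp {f g} : AP n f → AP n g → AP n (mcomp f g)

/-- The singleton-support map `⟨(k,l),(p,q)⟩` sending `(k,l)` to `(p,q)` and everything else to `ϑ`. -/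
def sis {n : ℕ} (k l p q : Fin n) : Brandt n → Brandt n :=
  fun x => if x = some (k, l) then some (p, q) else none

/-- The `n`-support map `(p,q;σ)` sending `(i,p)` to `(iσ,q)` and everything else to `ϑ`. -/
def nsp {n : ℕ} (p q : Fin n) (σ : Equiv.Perm (Fin n)) : Brandt n → Brandt n
  | some (i, j) => if j = p then some (σ i, q) else none
  | none => none

/-- Nonempty words over the alphabet `α` (the elements of the free semigroup `α⁺`). -/
def NEWord (α : Type*) := {l : List α // l ≠ []}

/-- Concatenation of nonempty words. -/
def neappend {α : Type*} (x y : NEWord α) : NEWord α :=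
  ⟨x.1 ++ y.1, fun h => x.2 (List.append_eq_nil_iff.mp h).1⟩

/-- The syntactic congruence of `L ⊆ Σ⁺` on the free semigroup of nonempty words:
`x ≈_L y` iff `uxv ∈ L ↔ uyv ∈ L` for all nonempty words `u, v`. -/
def synSemiSetoid {α : Type*} (L : Set (List α)) : Setoid (NEWord α) where
  r x y := ∀ u v : List α, u ≠ [] → v ≠ [] → ((u ++ x.1 ++ v) ∈ L ↔ (u ++ y.1 ++ v) ∈ L)
  iseqv := ⟨fun _ _ _ _ _ => Iff.rfl, fun h u v hu hv => (h u v hu hv).symm,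
    fun h1 h2 u v hu hv => (h1 u v hu hv).trans (h2 u v hu hv)⟩

/-- The syntactic congruence of `L ⊆ Σ*` on the free monoid of all words:
`x ≈_L y` iff `uxv ∈ L ↔ uyv ∈ L` for all words `u, v`. -/
def synMonSetoid {α : Type*} (L : Set (List α)) : Setoid (List α) where
  r x y := ∀ u v : List α, ((u ++ x ++ v) ∈ L ↔ (u ++ y ++ v) ∈ L)
  iseqv := ⟨fun _ _ _ => Iff.rfl, fun h u v => (h u v).symm,
    fun h1 h2 u v => (h1 u v).trans (h2 u v)⟩

/-- The sum `f + f + ⋯ + f` with `k+1` summands (the `(k+1)`-st additive power of `f`). -/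
def addPow {n : ℕ} (f : Brandt n → Brandt n) : ℕ → (Brandt n → Brandt n)
  | 0 => f
  | k + 1 => padd (addPow f k) f

/-- The composite `f ∘ f ∘ ⋯ ∘ f` with `k+1` factors (the `(k+1)`-st compositional power of `f`). -/
def compPow {n : ℕ} (f : Brandt n → Brandt n) : ℕ → (Brandt n → Brandt n)
  | 0 => f
  | k + 1 => mcomp (compPow f k) f

/-- The word map `φ : Σ⁺ → A⁺(B_n)`, `φ(f₁ f₂ ⋯ f_k) = f₁ + f₂ + ⋯ + f_k` (junk value `ξ_ϑ` on `[]`). -/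
def phiW {n : ℕ} : List {f : Brandt n → Brandt n // IsAffine f} → (Brandt n → Brandt n)
  | [] => xi none
  | a :: t => List.foldl (fun acc s => padd acc s.val) a.val t
section PDisjunctiveAux

variable {n : ℕ}

lemma bAdd_none_left' (a : Brandt n) : bAdd none a = none := rfl

lemma bAdd_none_right' (a : Brandt n) : bAdd a none = none := by cases a <;> rfl

lemma bAdd_some_some' (i j k l : Fin n) :
    bAdd (some (i, j)) (some (k, l)) = if j = k then some (i, l) else none := rfl

lemma ap_xi (c : Brandt n) : AP n (xi c) := by
  apply AP.base
  cases c with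
  | none =>
      exact ⟨xi none, none, fun a b => rfl, funext fun x => rfl⟩
  | some pq =>
      obtain ⟨p, q⟩ := pq
      refine ⟨xi (some (p, p)), some (p, q), fun a b => ?_, ?_⟩
      · simp [xi, bAdd_some_some']
      · funext x
        simp [xi, padd, bAdd_some_some']

/-- The endomorphism induced by a permutation. -/
def pim (σ : Equiv.Perm (Fin n)) : Brandt n → Brandt n
  | some (i, j) => some (σ i, σ j)
  | none => none

lemma ap_nsp (p q : Fin n) (σ : Equiv.Perm (Fin n)) : AP n (nsp p q σ) := by
  apply AP.base
  refine ⟨pim σ, some (σ p, q), fun a b => ?_, ?_⟩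
  · rcases a with _ | ⟨i, j⟩ <;> rcases b with _ | ⟨k, l⟩ <;>
      try rfl
    by_cases hjk : j = k <;>
      simp [pim, bAdd_some_some', hjk, Equiv.apply_eq_iff_eq]
  · funext x
    rcases x with _ | ⟨i, j⟩
    · rfl
    · by_cases hj : j = p <;>
        simp [nsp, padd, xi, pim, bAdd_some_some', hj, Equiv.apply_eq_iff_eq]

lemma sis_eq_padd (k l p q : Fin n) :
    sis k l p q = padd (nsp l k (Equiv.swap p k)) (nsp l q (Equiv.refl (Fin n))) := by
  funext x
  rcases x with _ | ⟨i, j⟩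
  · rfl
  · by_cases hj : j = l
    · subst hj
      by_cases hi : i = k
      · subst hi
        simp [sis, nsp, padd, bAdd_some_some', Equiv.swap_apply_right]
      · simp [sis, nsp, padd, bAdd_some_some', hi, Ne.symm hi, Prod.ext_iff]
    · simp [sis, nsp, padd, bAdd_none_left', hj, Prod.ext_iff]

lemma ap_sis (k l p q : Fin n) : AP n (sis k l p q) := by
  rw [sis_eq_padd]
  exact AP.add (ap_nsp _ _ _) (ap_nsp _ _ _)

lemma ap_const_of_none {f : Brandt n → Brandt n} (hf : AP n f) :
    f none ≠ none → ∀ x, f x = f none := by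
  induction hf with
  | base haff =>
      obtain ⟨g, c, hend, rfl⟩ := haff
      intro hne x
      rcases hgn : g none with _ | ⟨s, t⟩
      · exact absurd (by simp [padd, xi, hgn, bAdd_none_left']) hne
      rcases c with _ | ⟨t', u⟩
      · exact absurd (by simp [padd, xi, bAdd_none_right']) hne
      have htt' : t = t' := by
        by_contra hc
        exact hne (by simp [padd, xi, hgn, bAdd_some_some', hc])
      subst htt'
      have hid : g none = bAdd (g none) (g none) := by
        have := hend none none
        rwa [bAdd_none_left'] at this
      rw [hgn, bAdd_some_some'] at hid
      have hts : t = s := by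
        by_contra hc
        rw [if_neg hc] at hid
        simp at hid
      subst hts
      have hx : g none = bAdd (g x) (g none) := by
        have := hend x none
        rwa [bAdd_none_right'] at this
      rw [hgn] at hx
      rcases hgx : g x with _ | ⟨a, b⟩
      · rw [hgx, bAdd_none_left'] at hx
        simp at hx
      · rw [hgx, bAdd_some_some'] at hx
        by_cases hbt : b = t
        · subst hbt
          rw [if_pos rfl] at hx
          simp only [Option.some.injEq, Prod.mk.injEq, and_true] at hx
          rw [← hx] at hgx
          simp [padd, xi, hgx, hgn]
        · rw [if_neg hbt] at hx
          simp at hx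
  | add hf hg ihf ihg =>
      intro hne x
      rename_i f g
      have hfne : f none ≠ none := by
        intro hc
        exact hne (by simp [padd, hc, bAdd_none_left'])
      have hgne : g none ≠ none := by
        intro hc
        exact hne (by simp [padd, hc, bAdd_none_right'])
      simp [padd, ihf hfne x, ihg hgne x]
  | comp hf hg ihf ihg =>
      intro hne x
      rename_i f g
      by_cases hfn : f none = none
      · have hgne : g none ≠ none := by rwa [mcomp, hfn] at hne
        have hg' := ihg hgne
        show g (f x) = g (f none)
        rw [hg' (f x), hfn]
      · have hf' := ihf hfn
        show g (f x) = g (f none)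
        rw [hf' x]

lemma key_mem (o z : Fin n) (hoz : o ≠ z) (F : Brandt n → Brandt n) (k l q e : Fin n) :
    (padd (padd (sis k l o q) F) (xi (some (e, o))) ∈
      ({xi (some (o, z))} ∪ {f | ∃ k l : Fin n, f = sis k l o o} :
        Set (Brandt n → Brandt n))) ↔ F (some (k, l)) = some (q, e) := by
  constructor
  · rintro (hm | ⟨k', l', hm⟩)
    · have := congrFun hm none
      simp [padd, xi, sis, bAdd_none_left'] at this
    · have hnokl : ∀ x : Brandt n, x ≠ some (k, l) →
          padd (padd (sis k l o q) F) (xi (some (e, o))) x = none := by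
        intro x hx
        simp [padd, sis, hx, bAdd_none_left']
      have hk' : (k', l') = (k, l) := by
        by_contra hc
        have h1 := congrFun hm (some (k', l'))
        rw [hnokl (some (k', l')) (by simpa using hc)] at h1
        simp [sis] at h1
      rw [Prod.mk.injEq] at hk'
      rw [hk'.1, hk'.2] at hm
      have h1 := congrFun hm (some (k, l))
      simp only [sis, if_pos rfl] at h1
      rw [show padd (padd (sis k l o q) F) (xi (some (e, o))) (some (k, l)) =
          bAdd (bAdd (some (o, q)) (F (some (k, l)))) (some (e, o)) by
            simp [padd, xi, sis]] at h1
      rcases hF : F (some (k, l)) with _ | ⟨a, b⟩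
      · rw [hF, bAdd_none_right', bAdd_none_left'] at h1
        simp at h1
      · rw [hF, bAdd_some_some'] at h1
        by_cases hqa : q = a
        · subst hqa
          rw [if_pos rfl, bAdd_some_some'] at h1
          by_cases hbe : b = e
          · subst hbe; rfl
          · rw [if_neg hbe] at h1
            simp at h1
        · rw [if_neg hqa, bAdd_none_left'] at h1
          simp at h1
  · intro hF
    right
    refine ⟨k, l, ?_⟩
    funext x
    rcases x with _ | ⟨i, j⟩
    · simp [padd, sis, xi, bAdd_none_left']
    · by_cases hx : (i, j) = (k, l)
      · rw [Prod.mk.injEq] at hx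
        obtain ⟨rfl, rfl⟩ := hx
        simp [padd, sis, xi, hF, bAdd_some_some']
      · have hx' : (some (i, j) : Brandt n) ≠ some (k, l) := by simpa using hx
        simp [padd, sis, xi, hx', bAdd_none_left']

lemma no_mixed (o z : Fin n) (hoz : o ≠ z) (f g : Brandt n → Brandt n) (hf : AP n f)
    (h1 : ∀ u v : Brandt n → Brandt n, AP n u → AP n v →
      padd (padd u f) v ∈ ({xi (some (o, z))} ∪
        {f | ∃ k l : Fin n, f = sis k l o o} : Set (Brandt n → Brandt n)) →
      padd (padd u g) v ∈ ({xi (some (o, z))} ∪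
        {f | ∃ k l : Fin n, f = sis k l o o} : Set (Brandt n → Brandt n)))
    (hsame : ∀ k l : Fin n, f (some (k, l)) = g (some (k, l)))
    (b e : Fin n) (hf0 : f none = some (b, e)) (hg0 : g none = none) : False := by
  have hconst := ap_const_of_none hf (by rw [hf0]; simp)
  have hinP : padd (padd (xi (some (o, b))) f) (xi (some (e, z))) ∈
      ({xi (some (o, z))} ∪ {f | ∃ k l : Fin n, f = sis k l o o} :
        Set (Brandt n → Brandt n)) := by
    left
    show _ = _
    funext x
    rw [show padd (padd (xi (some (o, b))) f) (xi (some (e, z))) x =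
        bAdd (bAdd (some (o, b)) (f x)) (some (e, z)) from rfl]
    rw [hconst x, hf0]
    simp [xi, bAdd_some_some']
  have hm := h1 _ _ (ap_xi _) (ap_xi _) hinP
  rcases hm with hm | ⟨k', l', hm⟩
  · have := congrFun hm none
    rw [show padd (padd (xi (some (o, b))) g) (xi (some (e, z))) none =
        bAdd (bAdd (some (o, b)) (g none)) (some (e, z)) from rfl, hg0,
      bAdd_none_right', bAdd_none_left'] at this
    simp [xi] at this
  · have h2 := congrFun hm (some (k', l'))
    rw [show padd (padd (xi (some (o, b))) g) (xi (some (e, z))) (some (k', l')) =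
        bAdd (bAdd (some (o, b)) (g (some (k', l')))) (some (e, z)) from rfl,
      ← hsame k' l', hconst (some (k', l')), hf0] at h2
    simp [sis, bAdd_some_some'] at h2
    exact hoz h2.symm

end PDisjunctiveAux
/-- For `n ≥ 2`, the set `P = {ξ_{(1,2)}} ∪ {⟨(k,l),(1,1)⟩ : k,l}` is a disjunctive subset of
`(A⁺(B_n), +)`: if `u + f + v ∈ P ↔ u + g + v ∈ P` for all `u, v ∈ A⁺(B_n)`, then `f = g`. -/
theorem P_disjunctive_add (n : ℕ) (hn : 2 ≤ n)
    (P : Set (Brandt n → Brandt n))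
    (hP : P = {xi (some (⟨0, by omega⟩, ⟨1, by omega⟩))} ∪
      {f | ∃ k l : Fin n, f = sis k l ⟨0, by omega⟩ ⟨0, by omega⟩})
    (f g : Brandt n → Brandt n) (hf : AP n f) (hg : AP n g)
    (h : ∀ u v : Brandt n → Brandt n, AP n u → AP n v →
      (padd (padd u f) v ∈ P ↔ padd (padd u g) v ∈ P)) :
    f = g := by
  subst hP
  have hoz : (⟨0, by omega⟩ : Fin n) ≠ ⟨1, by omega⟩ := by
    intro hc
    simpa using congrArg Fin.val hc
  have hsame : ∀ k l : Fin n, f (some (k, l)) = g (some (k, l)) := by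
    intro k l
    have hiff : ∀ q e : Fin n,
        f (some (k, l)) = some (q, e) ↔ g (some (k, l)) = some (q, e) := by
      intro q e
      have hh := h (sis k l ⟨0, by omega⟩ q) (xi (some (e, ⟨0, by omega⟩)))
        (ap_sis _ _ _ _) (ap_xi _)
      have h1 := key_mem (n := n) ⟨0, by omega⟩ ⟨1, by omega⟩ hoz f k l q e
      have h2 := key_mem (n := n) ⟨0, by omega⟩ ⟨1, by omega⟩ hoz g k l q e
      exact h1.symm.trans (hh.trans h2)
    rcases hfv : f (some (k, l)) with _ | ⟨q, e⟩
    · rcases hgv : g (some (k, l)) with _ | ⟨q, e⟩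
      · rfl
      · have hc := (hiff q e).mpr hgv
        rw [hfv] at hc
        simp at hc
    · exact ((hiff q e).mp hfv).symm
  have hnone : f none = g none := by
    rcases hfv : f none with _ | ⟨b, e⟩ <;> rcases hgv : g none with _ | ⟨b', e'⟩
    · rfl
    · exact (no_mixed _ _ hoz g f hg
        (fun u v hu hv => (h u v hu hv).mpr) (fun k l => (hsame k l).symm)
        b' e' hgv hfv).elim
    · exact (no_mixed _ _ hoz f g hf
        (fun u v hu hv => (h u v hu hv).mp) hsame b e hfv hgv).elim
    · have hcf := ap_const_of_none hf (by rw [hfv]; simp)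
      have hcg := ap_const_of_none hg (by rw [hgv]; simp)
      have hkey := hsame ⟨0, by omega⟩ ⟨0, by omega⟩
      rw [hcf (some (⟨0, by omega⟩, ⟨0, by omega⟩)),
        hcg (some (⟨0, by omega⟩, ⟨0, by omega⟩))] at hkey
      rw [hfv, hgv] at hkey
      exact hkey
  funext x
  rcases x with _ | ⟨i, j⟩
  · exact hnone
  · exact hsame i j
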